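/- arXiv:math/9908144 — 2 statements merged into one kernel-verified Lean document; each statement's English description precedes it below -/
import Mathlib

section
/- Let a > 0. Suppose B_0 : ℕ → ℝ and, for each i ≥ 1, B_i : ℝ → ℝ are such that for every nonnegative integer n, every N > 0, and every real x, the polynomial y = C_n^{a,N} satisfies N B_0(n) y(x) + N ∑_{i=1}^{∞} B_i(x) Δ^i y(x) + x Δ∇y(x) + (a − x) Δy(x) + n y(x) = 0 (the sum is finite since Δ^i y = 0 for i > n). Then necessarily B_0(n) = (-1)^{n-1} C_{n-1}^{(a)}(-2) for all n, and B_i(x) = ∑_{k=1}^i (-1)^k C_{i-k}^{(-a)}(-x+1) [C_k^{(a)}(-1) C_k^{(a)}(x-2) − C_k^{(a)}(-2) C_k^{(a)}(x-1)] for all i ≥ 1 and all real x. -/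
/-- Generalized binomial coefficient `x(x-1)⋯(x-k+1)/k!`. -/
noncomputable def genChoose (x : ℝ) (k : ℕ) : ℝ :=
  (∏ j ∈ Finset.range k, (x - (j : ℝ))) / (Nat.factorial k : ℝ)

/-- The Charlier polynomial `C_n^{(a)}(x) = ∑_{k=0}^n (x choose k) (-a)^{n-k}/(n-k)!`. -/
noncomputable def charlier (a : ℝ) (n : ℕ) (x : ℝ) : ℝ :=
  ∑ k ∈ Finset.range (n + 1),
    genChoose x k * (-a) ^ (n - k) / (Nat.factorial (n - k) : ℝ)

/-- Charlier polynomial with integer index, with the convention `C_{-1}^{(a)} ≡ 0`. -/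
noncomputable def charlierZ (a : ℝ) (n : ℤ) (x : ℝ) : ℝ :=
  if 0 ≤ n then charlier a n.toNat x else 0

/-- Forward difference operator `Δf(x) = f(x+1) - f(x)`. -/
def fdiff (f : ℝ → ℝ) : ℝ → ℝ := fun x => f (x + 1) - f x

/-- Backward difference operator `∇f(x) = f(x) - f(x-1)`. -/
def bdiff (f : ℝ → ℝ) : ℝ → ℝ := fun x => f x - f (x - 1)

/-- The generalized Charlier polynomial
`C_n^{a,N}(x) = [1 + N(-1)^n C_n^{(a)}(-1)] C_n^{(a)}(x) - N(-1)^n C_n^{(a)}(0) C_n^{(a)}(x-1)`. -/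
noncomputable def genCharlier (a N : ℝ) (n : ℕ) (x : ℝ) : ℝ :=
  (1 + N * (-1) ^ n * charlier a n (-1)) * charlier a n x
    - N * (-1) ^ n * charlier a n 0 * charlier a n (x - 1)

/-- The coefficient `A_i(x)` (for `i ≥ 1`) of the difference equation. -/
noncomputable def Acoef (a : ℝ) (i : ℕ) (x : ℝ) : ℝ :=
  ∑ k ∈ Finset.Icc 1 i, (-1 : ℝ) ^ k * charlier (-a) (i - k) (-x + 1) *
    (charlier a k (-1) * charlier a k (x - 2) - charlier a k (-2) * charlier a k (x - 1))

/-- The coefficient `A_0 = (-1)^{n-1} C_{n-1}^{(a)}(-2)` (with `C_{-1}^{(a)} ≡ 0`). -/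
noncomputable def A0coef (a : ℝ) (n : ℕ) : ℝ :=
  (-1 : ℝ) ^ ((n : ℤ) - 1) * charlierZ a ((n : ℤ) - 1) (-2)

/-!
The generating function `∑ₙ C_n^{(b)}(x) tⁿ = (1 + t)^x e^{-bt}` yields the Pascal rule
`Δ C_{n+1}^{(b)} = C_n^{(b)}`, the three-term recurrence behind the Charlier difference equation,
and the convolution `∑_{l+m=n} C_l^{(-b)}(y) C_m^{(b)}(x) = (x+y choose n)`; the last one shows
that the `A_i` solve the equation for every `N`.

Since `C_n^{a,N} = c C_n(x) - d C_n(x-1)` with `c = 1 + N(-1)ⁿC_n(-1)` and `d = N(-1)ⁿC_n(0)`,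
its differences are `Δ^i C_n^{a,N} = c C_{n-i}(x) - d C_{n-i}(x-1)`. So for the differences
`D = B - A` the equation reads `c S(x) - d T(x) = 0`, with `S, T` the pairings of `D_i(x)` against
`C_{n-i}(x)` and `C_{n-i}(x-1)`. Being affine in `N` and `C_n(0) ≠ 0` (as `a ≠ 0`), it forces
`S = T = 0`. These relations are triangular: once `D_1, …, D_{n-1}` vanish, level `n` involves
only `D_0(n)` and `D_n`, and `S(1) - T(1) = D_0(n) C_{n-1}(0)`.
-/

open Finset PowerSeries

lemma PowerSeries.binomialSeries_one {R A : Type*} [CommRing R] [BinomialRing R] [Ring A]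
    [Algebra R A] : PowerSeries.binomialSeries A (1 : R) = 1 + X := by
  simpa using PowerSeries.binomialSeries_nat (R := R) (A := A) 1

lemma genChoose_eq_ringChoose (x : ℝ) (k : ℕ) : genChoose x k = Ring.choose x k := by
  rw [Ring.choose_eq_smul, genChoose, ← descPochhammer_eval_eq_prod_range, smul_eq_mul,
    div_eq_inv_mul, ← Polynomial.aeval_eq_smeval, ← descPochhammer_map (algebraMap ℤ ℝ),
    Polynomial.eval_map_algebraMap]

lemma charlier_zero_left (b x : ℝ) : charlier b 0 x = 1 := by
  simp [charlier, genChoose]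

noncomputable def charlierSeries (b x : ℝ) : ℝ⟦X⟧ := mk fun n => charlier b n x

@[simp]
lemma coeff_charlierSeries (b x : ℝ) (n : ℕ) : coeff n (charlierSeries b x) = charlier b n x :=
  coeff_mk _ _

lemma charlierSeries_eq (b x : ℝ) :
    charlierSeries b x = PowerSeries.binomialSeries ℝ x * rescale (-b) (exp ℝ) := by
  ext n
  simp [charlier, coeff_mul, Nat.sum_antidiagonal_eq_sum_range_succ_mk,
    genChoose_eq_ringChoose, div_eq_mul_inv, mul_assoc]

lemma charlierSeries_add (b x y : ℝ) :
    charlierSeries b (x + y) = PowerSeries.binomialSeries ℝ x * charlierSeries b y := by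
  rw [charlierSeries_eq, charlierSeries_eq, PowerSeries.binomialSeries_add, mul_assoc]

lemma charlierSeries_neg_mul (b x y : ℝ) :
    charlierSeries (-b) y * charlierSeries b x = PowerSeries.binomialSeries ℝ (x + y) := by
  rw [charlierSeries_eq, charlierSeries_eq, PowerSeries.binomialSeries_add, neg_neg,
    mul_mul_mul_comm, exp_mul_exp_eq_exp_add, add_neg_cancel, rescale_zero]
  simp [mul_comm]

lemma charlier_zero_right (b : ℝ) (n : ℕ) : charlier b n 0 = (-b) ^ n / n.factorial := by
  rw [← coeff_charlierSeries, charlierSeries_eq, PowerSeries.binomialSeries_zero, one_mul]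
  simp [coeff_exp, div_eq_mul_inv]

lemma charlier_zero_right_ne_zero {b : ℝ} (hb : b ≠ 0) (n : ℕ) : charlier b n 0 ≠ 0 := by
  rw [charlier_zero_right]
  exact div_ne_zero (pow_ne_zero _ (neg_ne_zero.2 hb)) (Nat.cast_ne_zero.2 n.factorial_ne_zero)


lemma charlier_succ_add_one (b x : ℝ) (n : ℕ) :
    charlier b (n + 1) (x + 1) = charlier b (n + 1) x + charlier b n x := by
  have h := congrArg (coeff (n + 1)) (charlierSeries_add b 1 x)
  rw [add_comm 1 x, PowerSeries.binomialSeries_one, add_mul, one_mul, map_add,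
    coeff_succ_X_mul] at h
  simpa using h

lemma charlier_succ_sub_one (b x : ℝ) (n : ℕ) :
    charlier b (n + 1) x = charlier b (n + 1) (x - 1) + charlier b n (x - 1) := by
  simpa using charlier_succ_add_one b (x - 1) n

lemma derivative_binomialSeries (r : ℝ) :
    d⁄dX ℝ (PowerSeries.binomialSeries ℝ r)
      = r • PowerSeries.binomialSeries ℝ (r - 1) := by
  ext n
  have h := Ring.choose_smul_choose r (Nat.le_add_left 1 n)
  simp only [Nat.choose_one_right, nsmul_eq_mul, Nat.cast_one, Ring.choose_one_right,
    Nat.add_sub_cancel] at h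
  simp [coeff_derivative, ← h, mul_comm]

lemma derivative_rescale_exp (c : ℝ) :
    d⁄dX ℝ (rescale c (exp ℝ)) = c • rescale c (exp ℝ) := by
  ext n
  simp only [coeff_derivative, coeff_rescale, coeff_exp, map_smul, smul_eq_mul, eq_ratCast]
  push_cast [Nat.factorial_succ, pow_succ]
  field_simp

lemma derivative_charlierSeries (b x : ℝ) :
    d⁄dX ℝ (charlierSeries b x)
      = x • charlierSeries b (x - 1) - b • charlierSeries b x := by
  rw [charlierSeries_eq, charlierSeries_eq, Derivation.leibniz, derivative_binomialSeries,
    derivative_rescale_exp, smul_eq_mul, smul_eq_mul, Algebra.mul_smul_comm,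
    Algebra.mul_smul_comm, mul_comm (rescale _ _)]
  module

lemma succ_mul_charlier_succ (b x : ℝ) (n : ℕ) :
    (n + 1) * charlier b (n + 1) x = -b * charlier b n x + x * charlier b n (x - 1) := by
  have h := congrArg (coeff n) (derivative_charlierSeries b x)
  simp only [coeff_derivative, coeff_charlierSeries, map_sub, map_smul, smul_eq_mul] at h
  linear_combination h

lemma fdiff_charlier_succ (b : ℝ) (n : ℕ) : fdiff (charlier b (n + 1)) = charlier b n := by
  funext x
  simp [fdiff, charlier_succ_add_one]

lemma fdiff_iterate_charlier (b : ℝ) (m k : ℕ) :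
    fdiff^[k] (charlier b (m + k)) = charlier b m := by
  induction k with
  | zero => rfl
  | succ k ih => rw [Function.iterate_succ_apply, ← add_assoc, fdiff_charlier_succ, ih]

lemma fdiff_iterate_charlier_of_lt (b : ℝ) {m k : ℕ} (h : m < k) :
    fdiff^[k] (charlier b m) = 0 := by
  obtain ⟨j, rfl⟩ := Nat.exists_eq_add_of_lt h
  have hconst : fdiff (charlier b 0) = 0 := by
    funext x
    simp [fdiff, charlier_zero_left]
  have hzero : fdiff (0 : ℝ → ℝ) = 0 := by
    funext x
    simp [fdiff]
  have hm : fdiff^[m] (charlier b m) = charlier b 0 := by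
    simpa using fdiff_iterate_charlier b 0 m
  rw [add_assoc, add_comm, Function.iterate_add_apply, Function.iterate_add_apply, hm,
    Function.iterate_one, hconst, Function.iterate_fixed hzero]

lemma fdiff_iterate_comb (c d : ℝ) (f : ℝ → ℝ) (k : ℕ) :
    fdiff^[k] (fun x => c * f x - d * f (x - 1))
      = fun x => c * fdiff^[k] f x - d * fdiff^[k] f (x - 1) := by
  induction k with
  | zero => rfl
  | succ k ih =>
    rw [Function.iterate_succ_apply', ih, Function.iterate_succ_apply']
    funext x
    simp only [fdiff, add_sub_cancel_right, sub_add_cancel]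
    ring

lemma tsum_fdiff_iterate_genCharlier (a N : ℝ) (n : ℕ) (B : ℕ → ℝ → ℝ) (x : ℝ) :
    ∑' i : ℕ, B (i + 1) x * fdiff^[i + 1] (genCharlier a N n) x
      = ∑ i ∈ range n, B (i + 1) x * fdiff^[i + 1] (genCharlier a N n) x := by
  refine tsum_eq_sum fun i hi => ?_
  unfold genCharlier
  rw [fdiff_iterate_comb, fdiff_iterate_charlier_of_lt a (by simp at hi; omega)]
  simp

noncomputable def coeffOp (B0 : ℕ → ℝ) (B : ℕ → ℝ → ℝ) (n : ℕ) (f : ℝ → ℝ)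
    (x : ℝ) : ℝ :=
  B0 n * f x + ∑ i ∈ range n, B (i + 1) x * fdiff^[i + 1] f x

lemma coeffOp_sub (B0 A0 : ℕ → ℝ) (B A : ℕ → ℝ → ℝ) (n : ℕ) (f : ℝ → ℝ)
    (x : ℝ) :
    coeffOp (B0 - A0) (B - A) n f x = coeffOp B0 B n f x - coeffOp A0 A n f x := by
  simp only [coeffOp, Pi.sub_apply, sub_mul, sum_sub_distrib]
  ring

noncomputable def charlierPairing (a : ℝ) (B0 : ℕ → ℝ) (B : ℕ → ℝ → ℝ) (n : ℕ)
    (x z : ℝ) : ℝ :=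
  B0 n * charlier a n z + ∑ i ∈ range n, B (i + 1) x * charlier a (n - (i + 1)) z

lemma coeffOp_comb (a c d : ℝ) (B0 : ℕ → ℝ) (B : ℕ → ℝ → ℝ) (n : ℕ) (x : ℝ) :
    coeffOp B0 B n (fun z => c * charlier a n z - d * charlier a n (z - 1)) x
      = c * charlierPairing a B0 B n x x - d * charlierPairing a B0 B n x (x - 1) := by
  have hterm : ∀ i ∈ range n,
      B (i + 1) x * fdiff^[i + 1] (fun z => c * charlier a n z - d * charlier a n (z - 1)) x
        = c * (B (i + 1) x * charlier a (n - (i + 1)) x)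
          - d * (B (i + 1) x * charlier a (n - (i + 1)) (x - 1)) := by
    intro i hi
    obtain ⟨m, rfl⟩ : ∃ m, n = m + (i + 1) := ⟨n - (i + 1), by simp at hi; omega⟩
    rw [fdiff_iterate_comb, fdiff_iterate_charlier, Nat.add_sub_cancel]
    ring
  rw [coeffOp, sum_congr rfl hterm, sum_sub_distrib, ← mul_sum, ← mul_sum, charlierPairing,
    charlierPairing]
  ring

lemma coeffOp_genCharlier (a N : ℝ) (B0 : ℕ → ℝ) (B : ℕ → ℝ → ℝ) (n : ℕ)
    (x : ℝ) :
    coeffOp B0 B n (genCharlier a N n) x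
      = (1 + N * (-1) ^ n * charlier a n (-1)) * charlierPairing a B0 B n x x
        - N * (-1) ^ n * charlier a n 0 * charlierPairing a B0 B n x (x - 1) :=
  coeffOp_comb a _ _ B0 B n x

noncomputable def charlierOp (a : ℝ) (n : ℕ) (f : ℝ → ℝ) (x : ℝ) : ℝ :=
  x * fdiff (bdiff f) x + (a - x) * fdiff f x + n * f x

lemma charlierOp_apply (a : ℝ) (n : ℕ) (f : ℝ → ℝ) (x : ℝ) :
    charlierOp a n f x = a * f (x + 1) - (a + x) * f x + x * f (x - 1) + n * f x := by
  simp only [charlierOp, fdiff, bdiff, add_sub_cancel_right]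
  ring

lemma charlierOp_charlier (a : ℝ) (n : ℕ) (x : ℝ) : charlierOp a n (charlier a n) x = 0 := by
  rw [charlierOp_apply]
  cases n with
  | zero => simp only [charlier_zero_left]; ring
  | succ n =>
    have hrec := succ_mul_charlier_succ a x n
    have hx := charlier_succ_add_one a x n
    have hx' := charlier_succ_sub_one a x n
    push_cast
    linear_combination a * hx - x * hx' + hrec

lemma charlierOp_genCharlier (a N : ℝ) (n : ℕ) (x : ℝ) :
    charlierOp a (n + 1) (genCharlier a N (n + 1)) x
      = N * (-1) ^ (n + 1) * charlier a (n + 1) 0 * charlier a n (x - 2) := by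
  have hx := charlierOp_charlier a (n + 1) x
  have hx' := charlierOp_charlier a (n + 1) (x - 1)
  have hpascal := charlier_succ_sub_one a (x - 1) n
  rw [charlierOp_apply] at hx hx' ⊢
  simp only [genCharlier, sub_add_cancel, add_sub_cancel_right, sub_sub,
    show (1 : ℝ) + 1 = 2 by norm_num] at hx hx' hpascal ⊢
  linear_combination (1 + N * (-1) ^ (n + 1) * charlier a (n + 1) (-1)) * hx
    - N * (-1) ^ (n + 1) * charlier a (n + 1) 0 * (hx' - hpascal)

noncomputable def charlierDet (a : ℝ) (k : ℕ) (x : ℝ) : ℝ :=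
  charlier a k (-1) * charlier a k (x - 2) - charlier a k (-2) * charlier a k (x - 1)

lemma charlierDet_succ (a : ℝ) (n : ℕ) (x : ℝ) :
    charlierDet a (n + 1) x
      = charlier a n (-2) * charlier a (n + 1) (x - 1)
        - charlier a (n + 1) (-1) * charlier a n (x - 2) := by
  have h1 := charlier_succ_sub_one a (x - 1) n
  have h2 := charlier_succ_sub_one a (-1) n
  rw [sub_sub, show (1 : ℝ) + 1 = 2 by norm_num] at h1
  norm_num at h2
  rw [charlierDet, h1, h2]
  ring

lemma charlierDet_succ_sub (a : ℝ) (n : ℕ) (x : ℝ) :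
    charlierDet a (n + 1) x - charlierDet a n x
      = charlier a n (-2) * charlier a (n + 1) x - charlier a (n + 1) 0 * charlier a n (x - 2) := by
  have hx := charlier_succ_sub_one a x n
  have h0 := charlier_succ_sub_one a 0 n
  rw [zero_sub] at h0
  rw [charlierDet_succ, charlierDet]
  linear_combination charlier a n (x - 2) * h0 - charlier a n (-2) * hx

lemma mk_Acoef (a x : ℝ) :
    mk (fun i => Acoef a i x)
      = charlierSeries (-a) (-x + 1) * mk fun k => (-1) ^ k * charlierDet a k x := by
  ext i
  rw [coeff_mk, mul_comm, coeff_mul, Nat.sum_antidiagonal_eq_sum_range_succ_mk, Acoef]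
  symm
  rw [sum_subset (show Icc 1 i ⊆ range (i + 1) from fun k hk => by simp at hk ⊢; omega)
    fun k hk hk' => ?_]
  · refine sum_congr rfl fun k _ => ?_
    simp only [charlierDet, coeff_mk, coeff_charlierSeries]
    ring
  · obtain rfl : k = 0 := by simp at hk hk'; omega
    simp [charlier_zero_left]

lemma sum_Acoef_mul_charlier (a x z : ℝ) (n : ℕ) :
    ∑ i ∈ range n, Acoef a (i + 1) x * charlier a (n - (i + 1)) z
      = coeff n (PowerSeries.binomialSeries ℝ (z + (-x + 1))
          * mk fun k => (-1) ^ k * charlierDet a k x) := by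
  rw [← charlierSeries_neg_mul, mul_right_comm, ← mk_Acoef, coeff_mul,
    Nat.sum_antidiagonal_eq_sum_range_succ_mk, sum_range_succ']
  simp [Acoef]

lemma A0coef_zero (a : ℝ) : A0coef a 0 = 0 := by
  simp [A0coef, charlierZ]

lemma A0coef_succ (a : ℝ) (n : ℕ) : A0coef a (n + 1) = (-1) ^ n * charlier a n (-2) := by
  simp [A0coef, charlierZ]

lemma charlierPairing_Acoef (a : ℝ) (n : ℕ) (x : ℝ) :
    charlierPairing a (A0coef a) (Acoef a) (n + 1) x x
      = (-1) ^ n * charlier a (n + 1) 0 * charlier a n (x - 2) := by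
  rw [charlierPairing, sum_Acoef_mul_charlier, show x + (-x + 1) = 1 by ring,
    PowerSeries.binomialSeries_one, add_mul, one_mul, map_add, coeff_succ_X_mul, coeff_mk, coeff_mk,
    A0coef_succ]
  linear_combination -(-1) ^ n * charlierDet_succ_sub a n x

lemma charlierPairing_Acoef_sub_one (a : ℝ) (n : ℕ) (x : ℝ) :
    charlierPairing a (A0coef a) (Acoef a) (n + 1) x (x - 1)
      = (-1) ^ n * charlier a (n + 1) (-1) * charlier a n (x - 2) := by
  rw [charlierPairing, sum_Acoef_mul_charlier, show x - 1 + (-x + 1) = 0 by ring,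
    PowerSeries.binomialSeries_zero, one_mul, coeff_mk, A0coef_succ, charlierDet_succ]
  ring

theorem genCharlier_difference_equation (a N : ℝ) (n : ℕ) (x : ℝ) :
    N * coeffOp (A0coef a) (Acoef a) n (genCharlier a N n) x
      + charlierOp a n (genCharlier a N n) x = 0 := by
  cases n with
  | zero =>
    simp [coeffOp, A0coef_zero, charlierOp_apply, genCharlier, charlier_zero_left]
  | succ n =>
    rw [coeffOp_genCharlier, charlierPairing_Acoef, charlierPairing_Acoef_sub_one,
      charlierOp_genCharlier]
    ring

section Uniqueness

variable {a : ℝ} {D0 : ℕ → ℝ} {D : ℕ → ℝ → ℝ}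

lemma charlierPairing_eq_zero_of_coeffOp (ha : a ≠ 0) {n : ℕ} {x : ℝ}
    (h : ∀ N : ℝ, 0 < N → coeffOp D0 D n (genCharlier a N n) x = 0) :
    charlierPairing a D0 D n x x = 0 ∧ charlierPairing a D0 D n x (x - 1) = 0 := by
  have h1 := h 1 one_pos
  have h2 := h 2 two_pos
  rw [coeffOp_genCharlier] at h1 h2
  have hS : charlierPairing a D0 D n x x = 0 := by linear_combination 2 * h1 - h2
  refine ⟨hS, ?_⟩
  have hv : (-1) ^ n * charlier a n 0 ≠ 0 :=
    mul_ne_zero (pow_ne_zero _ (by norm_num)) (charlier_zero_right_ne_zero ha n)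
  refine (mul_eq_zero.1 ?_).resolve_left hv
  linear_combination (1 + (-1) ^ n * charlier a n (-1)) * hS - h1

lemma charlierPairing_succ (n : ℕ) (x z : ℝ) (hD : ∀ k, 1 ≤ k → k ≤ n → D k x = 0) :
    charlierPairing a D0 D (n + 1) x z = D0 (n + 1) * charlier a (n + 1) z + D (n + 1) x := by
  rw [charlierPairing, sum_range_succ, sum_eq_zero fun i hi => ?_]
  · simp [charlier_zero_left]
  · rw [hD (i + 1) (by omega) (by simp at hi; omega), zero_mul]

lemma eq_zero_of_charlierPairing_eq_zero (ha : a ≠ 0)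
    (h : ∀ n x, charlierPairing a D0 D n x x = 0 ∧ charlierPairing a D0 D n x (x - 1) = 0) :
    (∀ n, D0 n = 0) ∧ ∀ k, 1 ≤ k → ∀ x, D k x = 0 := by
  suffices H : ∀ n, D0 n = 0 ∧ ∀ k, 1 ≤ k → k ≤ n → ∀ x, D k x = 0 from
    ⟨fun n => (H n).1, fun k hk => (H k).2 k hk le_rfl⟩
  intro n
  induction n with
  | zero => exact ⟨by simpa [charlierPairing, charlier_zero_left] using (h 0 0).1, by omega⟩
  | succ n ih =>
    have hpair : ∀ x z, charlierPairing a D0 D (n + 1) x z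
        = D0 (n + 1) * charlier a (n + 1) z + D (n + 1) x :=
      fun x z => charlierPairing_succ n x z fun k hk hkn => ih.2 k hk hkn x
    have hD0 : D0 (n + 1) = 0 := by
      have h1 := h (n + 1) 1
      rw [hpair, hpair, sub_self] at h1
      have hpascal := charlier_succ_add_one a 0 n
      rw [zero_add] at hpascal
      refine (mul_eq_zero.1 ?_).resolve_right (charlier_zero_right_ne_zero ha n)
      linear_combination h1.1 - h1.2 - D0 (n + 1) * hpascal
    refine ⟨hD0, fun k hk hkn x => ?_⟩
    rcases Nat.lt_or_eq_of_le hkn with hlt | rfl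
    · exact ih.2 k hk (by omega) x
    · simpa [hpair, hD0] using (h (n + 1) x).1

end Uniqueness

/-- Uniqueness of the coefficients in the difference equation: if coefficients
`B_0(n)` and `B_i(x)` (`i ≥ 1`) make every `y = C_n^{a,N}` satisfy
`N B_0(n) y(x) + N ∑_{i=1}^∞ B_i(x) Δ^i y(x) + x Δ∇y(x) + (a-x) Δy(x) + n y(x) = 0`,
then `B_0(n) = (-1)^{n-1} C_{n-1}^{(a)}(-2)` and `B_i(x) = A_i(x)` for all `i ≥ 1`. -/
theorem genCharlier_difference_equation_unique (a : ℝ) (ha : 0 < a)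
    (B0 : ℕ → ℝ) (B : ℕ → ℝ → ℝ)
    (h : ∀ (n : ℕ) (N : ℝ), 0 < N → ∀ x : ℝ,
      N * B0 n * genCharlier a N n x
        + N * ∑' i : ℕ, B (i + 1) x * fdiff^[i + 1] (genCharlier a N n) x
        + x * fdiff (bdiff (genCharlier a N n)) x
        + (a - x) * fdiff (genCharlier a N n) x
        + (n : ℝ) * genCharlier a N n x = 0) :
    (∀ n : ℕ, B0 n = A0coef a n) ∧ (∀ i : ℕ, 1 ≤ i → ∀ x : ℝ, B i x = Acoef a i x) := by
  have hdiff : ∀ (n : ℕ) (N : ℝ), 0 < N → ∀ x,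
      coeffOp (B0 - A0coef a) (B - Acoef a) n (genCharlier a N n) x = 0 := by
    intro n N hN x
    have hB := h n N hN x
    have hA := genCharlier_difference_equation a N n x
    rw [tsum_fdiff_iterate_genCharlier] at hB
    refine (mul_eq_zero.1 ?_).resolve_left hN.ne'
    rw [coeffOp_sub]
    simp only [coeffOp, charlierOp] at hA ⊢
    linear_combination hB - hA
  obtain ⟨h0, h1⟩ := eq_zero_of_charlierPairing_eq_zero ha.ne' fun n x =>
    charlierPairing_eq_zero_of_coeffOp ha.ne' fun N hN => hdiff n N hN x
  exact ⟨fun n => sub_eq_zero.1 (h0 n), fun i hi x => sub_eq_zero.1 (h1 i hi x)⟩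
end

section
/- Let a > 0. There do not exist a nonnegative integer M, functions B_0, B_1, …, B_M : ℝ → ℝ, and integers k_0, …, k_M with 0 ≤ k_i ≤ i, such that for every nonnegative integer n, every N > 0, and every real x, the polynomial y = C_n^{a,N} satisfies N ∑_{i=0}^{M} B_i(x) Δ^{k_i} ∇^{i−k_i} y(x) + x Δ∇y(x) + (a − x) Δy(x) + n y(x) = 0. In other words, every linear difference equation of this form satisfied by all the generalized Charlier polynomials has infinite order. -/
lemma fdiff_const' (c : ℝ) : fdiff (fun _ => c) = fun _ => 0 := by
  funext x; simp [fdiff]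

lemma bdiff_const' (c : ℝ) : bdiff (fun _ => c) = fun _ => 0 := by
  funext x; simp [bdiff]

lemma fdiff_iter_zero (k : ℕ) : fdiff^[k] (fun _ => (0:ℝ)) = fun _ => 0 := by
  induction k with
  | zero => rfl
  | succ n ih => rw [Function.iterate_succ_apply, fdiff_const']; exact ih

lemma bdiff_iter_zero (k : ℕ) : bdiff^[k] (fun _ => (0:ℝ)) = fun _ => 0 := by
  induction k with
  | zero => rfl
  | succ n ih => rw [Function.iterate_succ_apply, bdiff_const']; exact ih

lemma fdiff_iter_const (c : ℝ) (k : ℕ) (hk : 1 ≤ k) :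
    fdiff^[k] (fun _ => c) = fun _ => 0 := by
  obtain ⟨m, rfl⟩ := Nat.exists_eq_add_of_le hk
  rw [add_comm, Function.iterate_succ_apply, fdiff_const']; exact fdiff_iter_zero m

lemma bdiff_iter_const (c : ℝ) (k : ℕ) (hk : 1 ≤ k) :
    bdiff^[k] (fun _ => c) = fun _ => 0 := by
  obtain ⟨m, rfl⟩ := Nat.exists_eq_add_of_le hk
  rw [add_comm, Function.iterate_succ_apply, bdiff_const']; exact bdiff_iter_zero m

lemma fdiff_linear (c d : ℝ) : fdiff (fun x => c * x + d) = fun _ => c := by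
  funext x; simp [fdiff]; ring

lemma bdiff_linear (c d : ℝ) : bdiff (fun x => c * x + d) = fun _ => c := by
  funext x; simp [bdiff]; ring

lemma key_const (c : ℝ) (k j : ℕ) (h : 1 ≤ k + j) :
    fdiff^[k] (bdiff^[j] (fun _ : ℝ => c)) = fun _ => 0 := by
  rcases Nat.eq_zero_or_pos j with hj | hj
  · subst hj
    simpa using fdiff_iter_const c k (by omega)
  · rw [bdiff_iter_const c j hj]; exact fdiff_iter_zero k

lemma key_lin (c d : ℝ) (k j : ℕ) (h : 2 ≤ k + j) :
    fdiff^[k] (bdiff^[j] (fun x : ℝ => c * x + d)) = fun _ => 0 := by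
  rcases j with _ | m
  · simp only [Function.iterate_zero, id_eq]
    obtain ⟨p, rfl⟩ : ∃ p, k = p + 1 := ⟨k - 1, by omega⟩
    rw [Function.iterate_succ_apply, fdiff_linear]
    exact fdiff_iter_const c p (by omega)
  · rw [Function.iterate_succ_apply, bdiff_linear]
    rcases Nat.eq_zero_or_pos m with hm | hm
    · subst hm
      simp only [Function.iterate_zero, id_eq]
      exact fdiff_iter_const c k (by omega)
    · rw [bdiff_iter_const c m hm]; exact fdiff_iter_zero k

lemma key_lin_one (c d : ℝ) (k j : ℕ) (h : k + j = 1) :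
    fdiff^[k] (bdiff^[j] (fun x : ℝ => c * x + d)) = fun _ => c := by
  rcases Nat.eq_zero_or_pos k with hk | hk
  · subst hk
    have : j = 1 := by omega
    subst this
    simpa using bdiff_linear c d
  · have hk1 : k = 1 := by omega
    have hj : j = 0 := by omega
    subst hk1; subst hj
    simpa using fdiff_linear c d

lemma charlier_zero (a x : ℝ) : charlier a 0 x = 1 := by
  simp [charlier, genChoose]

lemma charlier_one (a x : ℝ) : charlier a 1 x = x - a := by
  simp [charlier, Finset.sum_range_succ, genChoose, Nat.factorial]
  ring

lemma genCharlier_zero (a N : ℝ) : genCharlier a N 0 = fun _ => 1 := by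
  funext x; simp [genCharlier, charlier_zero]

lemma genCharlier_one (a N : ℝ) : genCharlier a N 1 = fun x => (1 + N) * x + (-a) := by
  funext x
  simp only [genCharlier, charlier_one, pow_one]
  ring

/-- No finite-order linear difference equation of the form
`N ∑_{i=0}^M B_i(x) Δ^{k_i} ∇^{i-k_i} y(x) + x Δ∇y(x) + (a-x) Δy(x) + n y(x) = 0`
(with `0 ≤ k_i ≤ i`) is satisfied by all generalized Charlier polynomials. -/
theorem genCharlier_no_finite_order_difference_equation (a : ℝ) (ha : 0 < a) :
    ¬ ∃ (M : ℕ) (B : ℕ → ℝ → ℝ) (k : ℕ → ℕ),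
      (∀ i ≤ M, k i ≤ i) ∧
      ∀ (n : ℕ) (N : ℝ), 0 < N → ∀ x : ℝ,
        N * ∑ i ∈ Finset.range (M + 1),
            B i x * fdiff^[k i] (bdiff^[i - k i] (genCharlier a N n)) x
          + x * fdiff (bdiff (genCharlier a N n)) x
          + (a - x) * fdiff (genCharlier a N n) x
          + (n : ℝ) * genCharlier a N n x = 0 := by
  rintro ⟨M, B, k, hk, heq⟩
  have hk0 : k 0 = 0 := Nat.le_zero.mp (hk 0 (Nat.zero_le M))
  -- Step 1: B 0 x = 0 for all x, using n = 0 (genCharlier is the constant 1).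
  have hB0 : ∀ x : ℝ, B 0 x = 0 := by
    intro x
    have h := heq 0 1 one_pos x
    rw [genCharlier_zero a 1] at h
    have hs : (∑ i ∈ Finset.range (M + 1),
        B i x * fdiff^[k i] (bdiff^[i - k i] (fun _ : ℝ => (1:ℝ))) x) = B 0 x := by
      rw [Finset.sum_eq_single 0]
      · rw [hk0]; simp
      · intro b _ hb
        rw [key_const 1 (k b) (b - k b) (by omega)]
        simp
      · intro h0; exact absurd (Finset.mem_range.mpr (Nat.succ_pos M)) h0
    rw [hs] at h
    simp only [bdiff_const', fdiff_const'] at h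
    simpa using h
  -- Step 2: use n = 1 (genCharlier is x ↦ (1+N)x - a) at x = 0.
  have key : ∀ N : ℝ, 0 < N →
      N * ((if 1 ≤ M then B 1 0 else 0) * (1 + N)) + a * N = 0 := by
    intro N hN
    have h := heq 1 N hN 0
    rw [genCharlier_one a N] at h
    have hs : (∑ i ∈ Finset.range (M + 1),
        B i 0 * fdiff^[k i] (bdiff^[i - k i] (fun x : ℝ => (1 + N) * x + (-a))) 0)
        = (if 1 ≤ M then B 1 0 else 0) * (1 + N) := by
      by_cases hM : 1 ≤ M
      · rw [if_pos hM, Finset.sum_eq_single 1]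
        · rw [key_lin_one (1 + N) (-a) (k 1) (1 - k 1) (by have := hk 1 hM; omega)]
        · intro b hb hb1
          rcases Nat.eq_zero_or_pos b with hb0 | hbp
          · subst hb0; rw [hB0]; ring
          · have hbM : b ≤ M := by simpa [Nat.lt_succ_iff] using Finset.mem_range.mp hb
            have hb2 : 2 ≤ b := by omega
            rw [key_lin (1 + N) (-a) (k b) (b - k b) (by have := hk b hbM; omega)]
            simp
        · intro h1; exact absurd (Finset.mem_range.mpr (by omega)) h1
      · have hM0 : M = 0 := by omega
        subst hM0
        rw [if_neg hM]
        simp [Finset.sum_range_one, hk0, hB0]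
    rw [hs, bdiff_linear, fdiff_linear] at h
    simp only [Nat.cast_one, one_mul, mul_zero, zero_mul, zero_add, add_zero,
      sub_zero] at h
    linarith [h]
  have h1 := key 1 one_pos
  have h2 := key 2 two_pos
  by_cases hM : 1 ≤ M
  · rw [if_pos hM] at h1 h2
    nlinarith
  · rw [if_neg hM] at h1
    nlinarith
end
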